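/- Jacobi triple product identity: for complex q and x with 0 < |q| < 1 and x ≠ 0, the theta series θ_q(x) = ∑_{k∈ℤ} q^{k²} x^k equals the product (q²;q²)_∞ · (-qx;q²)_∞ · (-q/x;q²)_∞. -/

import Mathlib

/-!
The finite form of the identity,
`∏_{j<n} (1 + q^{2j+1} x)(1 + q^{2j+1}/x) = ∑_{|k| ≤ n} [2n, n+k]_{q²} q^{k²} x^k`,
is the q-binomial theorem `∏_{j<N} (1 + q^{2j+1} z) = ∑_m [N, m]_{q²} q^{m²} z^m`
(Gaussian binomials in base `q²`) at `N = 2n`, `z = x / q^{2n}`: the first `n` factors,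
read backwards, are `(x / q^{2j+1}) (1 + q^{2j+1}/x)`. As `n → ∞` the central Gaussian
binomials `[2n, n+k]_{q²}` tend to `1 / (q²;q²)_∞` and stay uniformly bounded, so Tannery's
theorem passes to the limit termwise.
-/

/-- The infinite q-Pochhammer symbol `(a;q)_∞ = ∏_{n ≥ 0} (1 - a qⁿ)`. -/
noncomputable def qPochInf (a q : ℂ) : ℂ := ∏' n : ℕ, (1 - a * q ^ n)

open Finset Filter Topology

section Algebra

variable {R : Type*} [CommRing R]

def qPoch (a q : R) (n : ℕ) : R := ∏ j ∈ range n, (1 - a * q ^ j)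

lemma qPoch_zero (a q : R) : qPoch a q 0 = 1 := prod_range_zero _

lemma qPoch_succ (a q : R) (n : ℕ) : qPoch a q (n + 1) = qPoch a q n * (1 - a * q ^ n) :=
  prod_range_succ _ _

lemma qPoch_succ' (a q : R) (n : ℕ) : qPoch a q (n + 1) = (1 - a) * qPoch (a * q) q n := by
  simp only [qPoch, prod_range_succ', pow_succ', mul_assoc, pow_zero, mul_one, mul_comm]

lemma qPoch_add (a q : R) (m n : ℕ) :
    qPoch a q (m + n) = qPoch a q m * qPoch (a * q ^ m) q n := by
  simp only [qPoch, prod_range_add, pow_add, mul_assoc]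

def qBinom (p : R) : ℕ → ℕ → R
  | _, 0 => 1
  | 0, _ + 1 => 0
  | n + 1, k + 1 => qBinom p n k + p ^ (k + 1) * qBinom p n (k + 1)

lemma qBinom_succ_succ (p : R) (n k : ℕ) :
    qBinom p (n + 1) (k + 1) = qBinom p n k + p ^ (k + 1) * qBinom p n (k + 1) := rfl

lemma qBinom_eq_zero_of_lt (p : R) {n k : ℕ} (h : n < k) : qBinom p n k = 0 := by
  induction n generalizing k with
  | zero => obtain ⟨k, rfl⟩ := Nat.exists_eq_succ_of_ne_zero h.ne'; rfl
  | succ n ih =>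
    obtain ⟨k, rfl⟩ := Nat.exists_eq_succ_of_ne_zero (by omega : k ≠ 0)
    rw [qBinom_succ_succ, ih (by omega), ih (by omega), mul_zero, add_zero]

lemma qBinom_mul_qPoch_mul_qPoch (p : R) {n k : ℕ} (h : k ≤ n) :
    qBinom p n k * qPoch p p k * qPoch p p (n - k) = qPoch p p n := by
  induction n generalizing k with
  | zero => obtain rfl := Nat.le_zero.1 h; simp [qBinom, qPoch_zero]
  | succ n ih =>
    rcases k with _ | k
    · simp [qBinom, qPoch_zero]
    rw [qBinom_succ_succ, Nat.succ_sub_succ, qPoch_succ p p k, qPoch_succ p p n]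
    rcases (Nat.lt_succ_iff.1 h).eq_or_lt with rfl | hlt
    · have h₀ := ih (k := k) le_rfl
      rw [Nat.sub_self, qPoch_zero] at h₀ ⊢
      rw [qBinom_eq_zero_of_lt p k.lt_succ_self]
      linear_combination (1 - p * p ^ k) * h₀
    · obtain ⟨d, rfl⟩ := Nat.exists_eq_add_of_lt hlt
      have h₁ := ih (k := k) (by omega)
      have h₂ := ih (k := k + 1) (by omega)
      rw [show k + d + 1 - k = d + 1 by omega, qPoch_succ] at h₁
      rw [show k + d + 1 - (k + 1) = d by omega, qPoch_succ] at h₂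
      rw [show k + d + 1 - k = d + 1 by omega, qPoch_succ]
      linear_combination (1 - p * p ^ k) * h₁ + p ^ (k + 1) * (1 - p * p ^ d) * h₂

lemma qPoch_neg_mul_eq_sum_qBinom (q z : R) (N : ℕ) :
    qPoch (-q * z) (q ^ 2) N = ∑ m ∈ range (N + 1), qBinom (q ^ 2) N m * q ^ (m ^ 2) * z ^ m := by
  induction N generalizing z with
  | zero => simp [qPoch_zero, qBinom]
  | succ N ih =>
    set S := ∑ m ∈ range (N + 1), qBinom (q ^ 2) N m * q ^ (m ^ 2) * (q ^ 2 * z) ^ m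
    have hS : S = ∑ m ∈ range (N + 2), qBinom (q ^ 2) N m * q ^ (m ^ 2) * (q ^ 2 * z) ^ m := by
      rw [sum_range_succ _ (N + 1), qBinom_eq_zero_of_lt _ N.lt_succ_self]; ring
    calc qPoch (-q * z) (q ^ 2) (N + 1) = S + q * z * S := by
          rw [qPoch_succ', show -q * z * q ^ 2 = -q * (q ^ 2 * z) by ring, ih]; ring
      _ = ∑ m ∈ range (N + 1),
            (q ^ 2) ^ (m + 1) * qBinom (q ^ 2) N (m + 1) * q ^ ((m + 1) ^ 2) * z ^ (m + 1) + 1 +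
          ∑ m ∈ range (N + 1), qBinom (q ^ 2) N m * q ^ ((m + 1) ^ 2) * z ^ (m + 1) := by
          nth_rw 1 [hS]
          rw [sum_range_succ', mul_sum]
          simp only [qBinom]
          congr 1
          · congr 1
            · exact sum_congr rfl fun m _ => by ring
            · ring
          · exact sum_congr rfl fun m _ => by ring
      _ = _ := by
          rw [sum_range_succ' _ (N + 1)]
          simp only [add_mul, sum_add_distrib, qBinom]
          ring

end Algebra

section Field

variable {K : Type*} [Field K] {q x : K}

lemma pow_mul_qPoch_neg_div (hq : q ≠ 0) (hx : x ≠ 0) (n : ℕ) :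
    x ^ n * qPoch (-q / x) (q ^ 2) n = q ^ (n ^ 2) * qPoch (-q * (x / q ^ (2 * n))) (q ^ 2) n := by
  induction n with
  | zero => simp [qPoch_zero]
  | succ n ih =>
    rw [qPoch_succ, qPoch_succ',
      show -q * (x / q ^ (2 * (n + 1))) * q ^ 2 = -q * (x / q ^ (2 * n)) by field_simp; ring]
    calc x ^ (n + 1) * (qPoch (-q / x) (q ^ 2) n * (1 - -q / x * (q ^ 2) ^ n))
        = x ^ n * qPoch (-q / x) (q ^ 2) n * (x + q ^ (2 * n + 1)) := by field_simp; ring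
      _ = _ := by rw [ih]; field_simp; ring

theorem qPoch_mul_qPoch_eq_sum_qBinom (hq : q ≠ 0) (hx : x ≠ 0) (n : ℕ) :
    qPoch (-q * x) (q ^ 2) n * qPoch (-q / x) (q ^ 2) n =
      ∑ k ∈ Icc (-(n : ℤ)) n, qBinom (q ^ 2) (2 * n) (n + k).toNat * (q ^ (k ^ 2) * x ^ k) := by
  have hbinom := qPoch_neg_mul_eq_sum_qBinom q (x / q ^ (2 * n)) (n + n)
  rw [qPoch_add, show -q * (x / q ^ (2 * n)) * (q ^ 2) ^ n = -q * x by field_simp; ring,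
    ← two_mul] at hbinom
  have hterm (m : ℕ) :
      q ^ (n ^ 2) * (qBinom (q ^ 2) (2 * n) m * q ^ (m ^ 2) * (x / q ^ (2 * n)) ^ m) / x ^ n =
        qBinom (q ^ 2) (2 * n) m * (q ^ (((m : ℤ) - n) ^ 2) * x ^ ((m : ℤ) - n)) := by
    rw [show ((m : ℤ) - n) ^ 2 = ((m ^ 2 + n ^ 2 : ℕ) : ℤ) - ((2 * n * m : ℕ) : ℤ) by
        push_cast; ring,
      zpow_sub₀ hq, zpow_sub₀ hx, zpow_natCast, zpow_natCast, zpow_natCast, zpow_natCast,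
      div_pow, ← pow_mul]
    field_simp
    ring
  calc qPoch (-q * x) (q ^ 2) n * qPoch (-q / x) (q ^ 2) n
      = q ^ (n ^ 2) * (qPoch (-q * (x / q ^ (2 * n))) (q ^ 2) n * qPoch (-q * x) (q ^ 2) n)
        / x ^ n := by
        rw [← mul_assoc, ← pow_mul_qPoch_neg_div hq hx]; field_simp
    _ = ∑ m ∈ range (2 * n + 1),
          qBinom (q ^ 2) (2 * n) m * (q ^ (((m : ℤ) - n) ^ 2) * x ^ ((m : ℤ) - n)) := by
        rw [hbinom, mul_sum, sum_div]
        exact sum_congr rfl fun m _ => hterm m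
    _ = _ := by
        refine sum_nbij' (fun m => (m : ℤ) - n) (fun k => (n + k).toNat) ?_ ?_ ?_ ?_ ?_
        · intro m hm; simp only [mem_range, mem_Icc] at hm ⊢; omega
        · intro k hk; simp only [mem_range, mem_Icc] at hk ⊢; omega
        · intro m _; omega
        · intro k hk; simp only [mem_Icc] at hk; omega
        · intro m _; simp only [add_sub_cancel, Int.toNat_natCast]

end Field

section Complex

variable {p q : ℂ}

lemma summable_norm_mul_pow (a : ℂ) (hq : ‖q‖ < 1) : Summable fun n : ℕ => ‖a * q ^ n‖ := by
  simpa using (summable_geometric_of_lt_one (norm_nonneg q) hq).mul_left ‖a‖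

lemma multipliable_one_sub_mul_pow (a : ℂ) (hq : ‖q‖ < 1) :
    Multipliable fun n : ℕ => 1 - a * q ^ n := by
  simpa [sub_eq_add_neg] using multipliable_one_add_of_summable
    (f := fun n : ℕ => -(a * q ^ n)) (by simpa using summable_norm_mul_pow a hq)

lemma tendsto_qPoch (a : ℂ) (hq : ‖q‖ < 1) : Tendsto (qPoch a q) atTop (𝓝 (qPochInf a q)) :=
  (multipliable_one_sub_mul_pow a hq).hasProd.tendsto_prod_nat

lemma mul_pow_ne_one (hp : ‖p‖ < 1) (n : ℕ) : p * p ^ n ≠ 1 := by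
  rw [← pow_succ']
  exact ne_of_apply_ne norm (by simpa using (pow_lt_one₀ (norm_nonneg p) hp n.succ_ne_zero).ne)

lemma qPoch_self_ne_zero (hp : ‖p‖ < 1) (n : ℕ) : qPoch p p n ≠ 0 :=
  prod_ne_zero_iff.2 fun j _ => sub_ne_zero.2 (mul_pow_ne_one hp j).symm

lemma qPochInf_self_ne_zero (hp : ‖p‖ < 1) : qPochInf p p ≠ 0 := by
  simpa [qPochInf, sub_eq_add_neg] using tprod_one_add_ne_zero_of_summable
    (f := fun n : ℕ => -(p * p ^ n))
    (fun n => by simpa [← sub_eq_add_neg, sub_eq_zero] using (mul_pow_ne_one hp n).symm)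
    (by simpa using summable_norm_mul_pow p hp)

lemma qBinom_eq_div (hp : ‖p‖ < 1) {n k : ℕ} (h : k ≤ n) :
    qBinom p n k = qPoch p p n / (qPoch p p k * qPoch p p (n - k)) := by
  rw [eq_div_iff (mul_ne_zero (qPoch_self_ne_zero hp k) (qPoch_self_ne_zero hp _)), ← mul_assoc,
    qBinom_mul_qPoch_mul_qPoch p h]

lemma exists_norm_qBinom_le (hp : ‖p‖ < 1) : ∃ C, ∀ n k, ‖qBinom p n k‖ ≤ C := by
  have hlim := tendsto_qPoch p hp
  obtain ⟨A, hA⟩ := (tendsto_norm.comp hlim).bddAbove_range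
  obtain ⟨B, hB⟩ := (tendsto_norm.comp (hlim.inv₀ (qPochInf_self_ne_zero hp))).bddAbove_range
  have hA' (n : ℕ) : ‖qPoch p p n‖ ≤ A := hA ⟨n, rfl⟩
  have hB' (n : ℕ) : ‖(qPoch p p n)⁻¹‖ ≤ B := hB ⟨n, rfl⟩
  have hA0 : 0 ≤ A := (norm_nonneg _).trans (hA' 0)
  have hB0 : 0 ≤ B := (norm_nonneg _).trans (hB' 0)
  refine ⟨A * B * B, fun n k => ?_⟩
  rcases le_or_gt k n with h | h
  · rw [qBinom_eq_div hp h, div_eq_mul_inv, mul_inv, ← mul_assoc, norm_mul, norm_mul]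
    exact mul_le_mul (mul_le_mul (hA' n) (hB' k) (norm_nonneg _) hA0) (hB' _) (norm_nonneg _)
      (mul_nonneg hA0 hB0)
  · rw [qBinom_eq_zero_of_lt p h, norm_zero]
    exact mul_nonneg (mul_nonneg hA0 hB0) hB0

lemma tendsto_qBinom_two_mul (hp : ‖p‖ < 1) (k : ℤ) :
    Tendsto (fun n : ℕ => qBinom p (2 * n) (n + k).toNat) atTop (𝓝 (qPochInf p p)⁻¹) := by
  have hlim := tendsto_qPoch p hp
  have hP := qPochInf_self_ne_zero hp
  have h₁ : Tendsto (fun n : ℕ => qPoch p p (2 * n)) atTop (𝓝 (qPochInf p p)) :=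
    hlim.comp (tendsto_atTop_atTop.2 fun b => ⟨b, fun n hn => by omega⟩)
  have h₂ : Tendsto (fun n : ℕ => qPoch p p (n + k).toNat) atTop (𝓝 (qPochInf p p)) :=
    hlim.comp (tendsto_atTop_atTop.2 fun b => ⟨b + k.natAbs, fun n hn => by omega⟩)
  have h₃ :
      Tendsto (fun n : ℕ => qPoch p p (2 * n - (n + k).toNat)) atTop (𝓝 (qPochInf p p)) :=
    hlim.comp (tendsto_atTop_atTop.2 fun b => ⟨b + k.natAbs, fun n hn => by omega⟩)
  have := h₁.div (h₂.mul h₃) (mul_ne_zero hP hP)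
  rw [div_mul_cancel_left₀ hP] at this
  refine this.congr' ?_
  filter_upwards [eventually_ge_atTop k.natAbs] with n hn
  rw [qBinom_eq_div hp (by omega), Pi.div_apply]

lemma summable_pow_sq_mul_pow {r X : ℝ} (hr₀ : 0 ≤ r) (hr : r < 1) (hX : 0 ≤ X) :
    Summable fun m : ℕ => r ^ (m ^ 2) * X ^ m := by
  have hsmall : ∀ᶠ m : ℕ in atTop, r ^ m * X ≤ 1 / 2 := by
    refine ((tendsto_pow_atTop_nhds_zero_of_lt_one hr₀ hr).mul_const X).eventually_le_const ?_
    norm_num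
  refine summable_geometric_two.of_norm_bounded_eventually_nat ?_
  filter_upwards [hsmall] with m hm
  rw [Real.norm_of_nonneg (by positivity), sq, pow_mul, ← mul_pow]
  exact pow_le_pow_left₀ (by positivity) hm m

lemma summable_norm_zpow_sq_mul_zpow (hq : ‖q‖ < 1) (x : ℂ) :
    Summable fun k : ℤ => ‖q ^ (k ^ 2) * x ^ k‖ := by
  have hsum (X : ℝ) (hX : 0 ≤ X) := summable_pow_sq_mul_pow (norm_nonneg q) hq hX
  refine .of_nat_of_neg ((hsum _ (norm_nonneg x)).congr fun m => ?_)
    ((hsum _ (inv_nonneg.2 (norm_nonneg x))).congr fun m => ?_)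
  all_goals simp [norm_zpow, ← zpow_natCast]

theorem tendsto_sum_qBinom_mul (hp : ‖p‖ < 1) {f : ℤ → ℂ} (hf : Summable fun k => ‖f k‖) :
    Tendsto (fun n : ℕ => ∑ k ∈ Icc (-(n : ℤ)) n, qBinom p (2 * n) (n + k).toNat * f k) atTop
      (𝓝 ((qPochInf p p)⁻¹ * ∑' k, f k)) := by
  obtain ⟨C, hC⟩ := exists_norm_qBinom_le hp
  let F (n : ℕ) : ℤ → ℂ :=
    Set.indicator (Icc (-(n : ℤ)) n) fun k => qBinom p (2 * n) (n + k).toNat * f k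
  have hF (n : ℕ) :
      ∑' k, F n k = ∑ k ∈ Icc (-(n : ℤ)) n, qBinom p (2 * n) (n + k).toNat * f k :=
    (sum_eq_tsum_indicator _ _).symm
  have hlim (k : ℤ) : Tendsto (F · k) atTop (𝓝 ((qPochInf p p)⁻¹ * f k)) := by
    refine ((tendsto_qBinom_two_mul hp k).mul_const (f k)).congr' ?_
    filter_upwards [eventually_ge_atTop k.natAbs] with n hn
    have hk : k ∈ Icc (-(n : ℤ)) n := mem_Icc.2 ⟨by omega, by omega⟩
    simp only [F, Set.indicator_of_mem (mem_coe.2 hk)]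
  have hbound (n : ℕ) (k : ℤ) : ‖F n k‖ ≤ C * ‖f k‖ :=
    (norm_indicator_le_norm_self _ _).trans (by rw [norm_mul]; gcongr; exact hC _ _)
  simpa only [hF, tsum_mul_left] using
    tendsto_tsum_of_dominated_convergence (hf.mul_left C) hlim (Eventually.of_forall hbound)

end Complex

/-- the Jacobi triple product identity:
`θ_q(x) = ∑_{k∈ℤ} q^{k²} x^k = (q²;q²)_∞ (-qx;q²)_∞ (-q/x;q²)_∞`
for `0 < |q| < 1` and `x ≠ 0`. -/
theorem jacobi_triple_product (q x : ℂ) (hq0 : 0 < ‖q‖) (hq1 : ‖q‖ < 1) (hx : x ≠ 0) :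
    ∑' k : ℤ, q ^ (k ^ 2) * x ^ k =
      qPochInf (q ^ 2) (q ^ 2) * qPochInf (-q * x) (q ^ 2) * qPochInf (-q / x) (q ^ 2) := by
  have hp : ‖q ^ 2‖ < 1 := by rw [norm_pow]; exact pow_lt_one₀ (norm_nonneg q) hq1 two_ne_zero
  have hsum := tendsto_sum_qBinom_mul hp (summable_norm_zpow_sq_mul_zpow hq1 x)
  simp_rw [← qPoch_mul_qPoch_eq_sum_qBinom (norm_pos_iff.1 hq0) hx] at hsum
  have hprod := tendsto_nhds_unique hsum ((tendsto_qPoch _ hp).mul (tendsto_qPoch _ hp))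
  rw [mul_assoc, ← hprod, ← mul_assoc, mul_inv_cancel₀ (qPochInf_self_ne_zero hp), one_mul]
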